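/- arXiv:2604.22807 — 2 statements merged into one kernel-verified Lean document; each statement's English description precedes it below -/
import Mathlib

section
/- Let n ≥ 1 and let σ denote the uniform probability measure on the unit sphere S^{n−1} = {θ ∈ ℝⁿ : ‖θ‖ = 1} (normalized rotation-invariant surface measure). Let d, g : S^{n−1} → ℝ be continuous functions with d(θ) > 0 and g(θ) ≥ 0 for all θ. If ∫_{S^{n−1}} sqrt(d(θ) g(θ)) σ(dθ) = ∫_{S^{n−1}} d(θ) σ(dθ) and ∫_{S^{n−1}} g(θ)^{3/2} d(θ)^{−1/2} σ(dθ) = ∫_{S^{n−1}} g(θ) σ(dθ), then d(θ) = g(θ) for every θ ∈ S^{n−1}. -/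
/-!
With `a = √g` and `b = √d`, the integrand `g^{3/2} d^{-1/2} - √(dg) - (g - d)` equals
`(a - b)² (a + b) / b ≥ 0`, and the two hypotheses say exactly that its integral vanishes.
Since it is continuous and `σ` charges every nonempty open subset of the sphere, it vanishes
identically, which forces `a = b`.
-/

open MeasureTheory Metric

/-- The uniform (normalized rotation-invariant) probability measure on the unit sphere
`S^{n-1} ⊆ ℝⁿ`. -/
noncomputable def sphereUniform (n : ℕ) :
    Measure (sphere (0 : EuclideanSpace ℝ (Fin n)) 1) :=
  ((volume : Measure (EuclideanSpace ℝ (Fin n))).toSphere Set.univ)⁻¹ •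
    (volume : Measure (EuclideanSpace ℝ (Fin n))).toSphere

instance (n : ℕ) : IsFiniteMeasure (sphereUniform n) := IsFiniteMeasure.average

instance (n : ℕ) : (sphereUniform n).IsOpenPosMeasure :=
  Measure.isOpenPosMeasure_smul _ (ENNReal.inv_ne_zero.2 (measure_ne_top _ _))

namespace Real

lemma rpow_three_div_two {x : ℝ} (hx : 0 ≤ x) : x ^ ((3 : ℝ) / 2) = √x ^ 3 := by
  rw [sqrt_eq_rpow, ← rpow_natCast, ← rpow_mul hx]
  norm_num

lemma rpow_neg_one_div_two {x : ℝ} (hx : 0 ≤ x) : x ^ (-(1 : ℝ) / 2) = (√x)⁻¹ := by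
  rw [sqrt_eq_rpow, neg_div, rpow_neg hx]

end Real

noncomputable def sqrtDefect (d g : ℝ) : ℝ :=
  g ^ ((3 : ℝ) / 2) * d ^ (-(1 : ℝ) / 2) - √(d * g) - (g - d)

section sqrtDefect

variable {d g : ℝ}

lemma sqrtDefect_eq (hd : 0 < d) (hg : 0 ≤ g) :
    sqrtDefect d g = (√g - √d) ^ 2 * (√g + √d) / √d := by
  have hsd : 0 < √d := Real.sqrt_pos.2 hd
  rw [sqrtDefect, Real.rpow_three_div_two hg, Real.rpow_neg_one_div_two hd.le,
    Real.sqrt_mul hd.le, ← Real.sq_sqrt hd.le, ← Real.sq_sqrt hg, Real.sqrt_sq hsd.le,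
    Real.sqrt_sq (Real.sqrt_nonneg g)]
  field_simp
  ring

lemma sqrtDefect_nonneg (hd : 0 < d) (hg : 0 ≤ g) : 0 ≤ sqrtDefect d g := by
  rw [sqrtDefect_eq hd hg]
  positivity

lemma sqrtDefect_eq_zero_iff (hd : 0 < d) (hg : 0 ≤ g) : sqrtDefect d g = 0 ↔ d = g := by
  have hsd : 0 < √d := Real.sqrt_pos.2 hd
  have hsum : 0 < √g + √d := by positivity
  constructor
  · intro h
    rw [sqrtDefect_eq hd hg, div_eq_zero_iff, mul_eq_zero, pow_eq_zero_iff two_ne_zero,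
      sub_eq_zero] at h
    rcases h with (h | h) | h
    · rw [← Real.sq_sqrt hd.le, ← Real.sq_sqrt hg, h]
    · exact absurd h hsum.ne'
    · exact absurd h hsd.ne'
  · rintro rfl
    simp [sqrtDefect_eq hd hg]

end sqrtDefect

theorem eq_of_integral_sqrt_mul_eq_of_integral_rpow_mul_rpow_eq {X : Type*} [TopologicalSpace X]
    [CompactSpace X] [MeasurableSpace X] [OpensMeasurableSpace X] (μ : Measure X)
    [IsFiniteMeasure μ] [μ.IsOpenPosMeasure] {d g : X → ℝ}
    (hd : Continuous d) (hg : Continuous g) (hdpos : ∀ x, 0 < d x) (hgnn : ∀ x, 0 ≤ g x)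
    (h1 : ∫ x, √(d x * g x) ∂μ = ∫ x, d x ∂μ)
    (h2 : ∫ x, g x ^ ((3 : ℝ) / 2) * d x ^ (-(1 : ℝ) / 2) ∂μ = ∫ x, g x ∂μ) :
    d = g := by
  have hint {f : X → ℝ} (hf : Continuous f) : Integrable f μ :=
    hf.integrable_of_hasCompactSupport (.of_compactSpace f)
  have hpow : Continuous fun x ↦ g x ^ ((3 : ℝ) / 2) * d x ^ (-(1 : ℝ) / 2) :=
    (hg.rpow_const fun _ ↦ Or.inr (by norm_num)).mul
      (hd.rpow_const fun x ↦ Or.inl (hdpos x).ne')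
  have hsqrt : Continuous fun x ↦ √(d x * g x) := (hd.mul hg).sqrt
  have hzero : ∫ x, sqrtDefect (d x) (g x) ∂μ = 0 := by
    simp only [sqrtDefect]
    rw [integral_sub, integral_sub, integral_sub, h1, h2, sub_self]
    exacts [hint hg, hint hd, hint hpow, hint hsqrt, hint (hpow.sub hsqrt), hint (hg.sub hd)]
  have hcont : Continuous fun x ↦ sqrtDefect (d x) (g x) := (hpow.sub hsqrt).sub (hg.sub hd)
  funext x
  by_contra hne
  have hpos : 0 < ∫ x, sqrtDefect (d x) (g x) ∂μ :=
    hcont.integral_pos_of_hasCompactSupport_nonneg_nonzero (.of_compactSpace _)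
      (fun y ↦ sqrtDefect_nonneg (hdpos y) (hgnn y))
      (mt (sqrtDefect_eq_zero_iff (hdpos x) (hgnn x)).1 hne)
  exact hpos.ne' hzero

theorem sliced_integral_conditions_imply_equal_general
    (n : ℕ)
    (d g : sphere (0 : EuclideanSpace ℝ (Fin n)) 1 → ℝ)
    (hd : Continuous d) (hg : Continuous g)
    (hdpos : ∀ θ, 0 < d θ) (hgnn : ∀ θ, 0 ≤ g θ)
    (h1 : ∫ θ, Real.sqrt (d θ * g θ) ∂(sphereUniform n)
        = ∫ θ, d θ ∂(sphereUniform n))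
    (h2 : ∫ θ, g θ ^ ((3 : ℝ) / 2) * d θ ^ (-(1 : ℝ) / 2) ∂(sphereUniform n)
        = ∫ θ, g θ ∂(sphereUniform n)) :
    ∀ θ, d θ = g θ :=
  congrFun (eq_of_integral_sqrt_mul_eq_of_integral_rpow_mul_rpow_eq (sphereUniform n)
    hd hg hdpos hgnn h1 h2)

/-- If `d > 0` and `g ≥ 0` are continuous on the sphere and
`∫ √(dg) dσ = ∫ d dσ` and `∫ g^{3/2} d^{-1/2} dσ = ∫ g dσ`, then `d ≡ g`. -/
theorem sliced_integral_conditions_imply_equal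
    (n : ℕ) (hn : 1 ≤ n)
    (d g : sphere (0 : EuclideanSpace ℝ (Fin n)) 1 → ℝ)
    (hd : Continuous d) (hg : Continuous g)
    (hdpos : ∀ θ, 0 < d θ) (hgnn : ∀ θ, 0 ≤ g θ)
    (h1 : ∫ θ, Real.sqrt (d θ * g θ) ∂(sphereUniform n)
        = ∫ θ, d θ ∂(sphereUniform n))
    (h2 : ∫ θ, g θ ^ ((3 : ℝ) / 2) * d θ ^ (-(1 : ℝ) / 2) ∂(sphereUniform n)
        = ∫ θ, g θ ∂(sphereUniform n)) :
    ∀ θ, d θ = g θ :=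
  sliced_integral_conditions_imply_equal_general n d g hd hg hdpos hgnn h1 h2
end

section
/- Let n ≥ 1, T > 0, m_f ∈ ℝⁿ, let Σ_f be a symmetric positive definite n×n real matrix, and let σ denote the uniform probability measure on the unit sphere S^{n−1} = {θ ∈ ℝⁿ : ‖θ‖ = 1} (normalized rotation-invariant surface measure). Suppose m : [0, T) → ℝⁿ and Σ : [0, T) → (n×n real symmetric positive definite matrices) are differentiable and satisfy, for all t ∈ [0, T), m′(t) = −(1/(n(T − t)))(m(t) − m_f) and Σ′(t) = K(t) Σ(t) + Σ(t) K(t)ᵀ, where K(t) := (1/(T − t)) [ ∫_{S^{n−1}} sqrt((θᵀ Σ_f θ)/(θᵀ Σ(t) θ)) θ θᵀ σ(dθ) − (1/n) I_n ]. Define f : [0, T) → ℝ by f(t) := ∫_{S^{n−1}} [ (θᵀ(m(t) − m_f))² + ( sqrt(θᵀ Σ(t) θ) − sqrt(θᵀ Σ_f θ) )² ] σ(dθ). Then f is nonincreasing on [0, T). -/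
open MeasureTheory Metric Matrix

/-- The projection `θᵀ x` of `x ∈ ℝⁿ` onto the direction `θ` of the unit sphere. -/
noncomputable def sprj {n : ℕ} (θ : sphere (0 : EuclideanSpace ℝ (Fin n)) 1)
    (x : EuclideanSpace ℝ (Fin n)) : ℝ :=
  ∑ i, (θ : EuclideanSpace ℝ (Fin n)) i * x i

/-- The quadratic form `θᵀ A θ` for a direction `θ` on the unit sphere. -/
noncomputable def squad {n : ℕ} (A : Matrix (Fin n) (Fin n) ℝ)
    (θ : sphere (0 : EuclideanSpace ℝ (Fin n)) 1) : ℝ :=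
  ∑ i, ∑ j, (θ : EuclideanSpace ℝ (Fin n)) i * A i j * (θ : EuclideanSpace ℝ (Fin n)) j


/-!
Differentiate under the integral sign. With `x = m - m_f` and `r(θ) = √(θᵀΣ_fθ / θᵀΣθ)`, the
chain rule turns the integrand's derivative into `-(2 / (n(T - t))) (θᵀx)² + (1 - r) θᵀ(KΣ + ΣKᵀ)θ`.
The first term is nonpositive pointwise. For the second, the second moments `∫ θᵢθⱼ dσ = δᵢⱼ / n`
(invariance of `σ` under coordinate swaps and sign flips) give `∫ (1 - r) θθᵀ dσ = -(T - t) K`, so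
its integral is `-(T - t) tr((KΣ + ΣKᵀ)Kᵀ) = -2(T - t) tr(KΣKᵀ) ≤ 0`, because `K` is symmetric.
-/

open Set Pointwise

namespace LinearIsometryEquiv

variable {E : Type*} [NormedAddCommGroup E] [NormedSpace ℝ E]

def sphereHomeomorph (e : E ≃ₗᵢ[ℝ] E) : sphere (0 : E) 1 ≃ₜ sphere (0 : E) 1 :=
  e.toHomeomorph.subtype fun x => by simp

@[simp]
lemma coe_sphereHomeomorph_apply (e : E ≃ₗᵢ[ℝ] E) (θ : sphere (0 : E) 1) :
    (e.sphereHomeomorph θ : E) = e θ :=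
  rfl

lemma smul_image_coe_preimage_sphereHomeomorph (e : E ≃ₗᵢ[ℝ] E) (I : Set ℝ)
    (s : Set (sphere (0 : E) 1)) :
    I • ((↑) '' (e.sphereHomeomorph ⁻¹' s) : Set E) = e ⁻¹' (I • ((↑) '' s)) := by
  rw [← e.sphereHomeomorph.image_symm, image_image, ← e.symm_symm,
    ← e.symm.image_eq_preimage_symm, ← image2_smul, ← image2_smul,
    image_image2_distrib_right fun a b => e.symm.map_smul a b, image_image]
  rfl

lemma measurePreserving_sphereHomeomorph [MeasurableSpace E] [BorelSpace E] {μ : Measure E}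
    (e : E ≃ₗᵢ[ℝ] E) (he : MeasurePreserving e μ μ) :
    MeasurePreserving e.sphereHomeomorph μ.toSphere μ.toSphere := by
  have hφ := e.sphereHomeomorph.continuous.measurable
  refine ⟨hφ, Measure.ext fun s hs => ?_⟩
  rw [Measure.map_apply hφ hs, μ.toSphere_apply' hs, μ.toSphere_apply' (hφ hs),
    smul_image_coe_preimage_sphereHomeomorph,
    he.measure_preimage_emb e.toHomeomorph.measurableEmbedding]

end LinearIsometryEquiv

theorem antitoneOn_integral_of_hasDerivWithinAt {X : Type*} [TopologicalSpace X] [CompactSpace X]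
    [MeasurableSpace X] [OpensMeasurableSpace X] {μ : Measure X} [IsFiniteMeasure μ]
    {D : Set ℝ} (hD : Convex ℝ D) {F G : ℝ → X → ℝ}
    (hF : ContinuousOn (fun p : ℝ × X => F p.1 p.2) (D ×ˢ univ))
    (hG : ContinuousOn (fun p : ℝ × X => G p.1 p.2) (interior D ×ˢ univ))
    (hFG : ∀ t ∈ D, ∀ x, HasDerivWithinAt (F · x) (G t x) D t)
    (hG_nonpos : ∀ t ∈ interior D, ∫ x, G t x ∂μ ≤ 0) :
    AntitoneOn (fun t => ∫ x, F t x ∂μ) D := by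
  have hFt : ∀ t ∈ D, Continuous (F t) := fun t ht =>
    hF.comp_continuous (Continuous.prodMk_right t) fun x => ⟨ht, mem_univ x⟩
  have hderiv : ∀ t ∈ interior D,
      HasDerivAt (fun t => ∫ x, F t x ∂μ) (∫ x, G t x ∂μ) t := by
    intro t ht
    obtain ⟨ε, hε, hball⟩ := Metric.nhds_basis_closedBall.mem_iff.mp
      (isOpen_interior.mem_nhds ht)
    obtain ⟨C, hC⟩ := ((isCompact_closedBall t ε).prod isCompact_univ).exists_bound_of_continuousOn
      (hG.mono (prod_mono hball subset_rfl))
    have hsub : ∀ s ∈ closedBall t ε, s ∈ D := fun s hs => interior_subset (hball hs)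
    refine (hasDerivAt_integral_of_dominated_loc_of_deriv_le (closedBall_mem_nhds t hε)
      (Filter.eventually_of_mem (closedBall_mem_nhds t hε) fun s hs =>
        (hFt s (hsub s hs)).aestronglyMeasurable)
      ((hFt t (interior_subset ht)).integrable_of_hasCompactSupport
        (HasCompactSupport.of_compactSpace _)) ?_ ?_ (integrable_const C) ?_).2
    · exact (hG.comp_continuous (Continuous.prodMk_right t) fun x => ⟨ht, mem_univ x⟩)
        |>.aestronglyMeasurable
    · exact ae_of_all _ fun x s hs => hC (s, x) ⟨hs, mem_univ x⟩
    · exact ae_of_all _ fun x s hs =>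
        (hFG s (hsub s hs) x).hasDerivAt (mem_interior_iff_mem_nhds.mp (hball hs))
  exact antitoneOn_of_hasDerivWithinAt_nonpos hD
    (continuousOn_integral_of_compact_support isCompact_univ hF fun _ _ _ hx => (hx trivial).elim)
    (fun t ht => (hderiv t ht).hasDerivWithinAt) hG_nonpos

lemma HasDerivWithinAt.sq_sqrt_sub_sqrt {q : ℝ → ℝ} {q' : ℝ} {s : Set ℝ} {t : ℝ}
    (hq : HasDerivWithinAt q q' s t) (hpos : 0 < q t) (b : ℝ) :
    HasDerivWithinAt (fun t => (√(q t) - √b) ^ 2) ((1 - √(b / q t)) * q') s t := by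
  refine (((hq.sqrt hpos.ne').sub_const √b).fun_pow 2).congr_deriv ?_
  have : √(q t) ≠ 0 := (Real.sqrt_pos.mpr hpos).ne'
  rw [Real.sqrt_div' b hpos.le]
  field_simp
  ring

lemma Matrix.PosSemidef.sum_mul_add_mul_transpose_apply_mul_nonneg {ι : Type*} [Fintype ι]
    {S K : Matrix ι ι ℝ} (hS : S.PosSemidef) (hK : Kᵀ = K) :
    0 ≤ ∑ i, ∑ j, (K * S + S * Kᵀ) i j * K i j := by
  have htrace : ∑ i, ∑ j, (K * S + S * Kᵀ) i j * K i j = 2 * trace (K * S * Kᵀ) := by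
    have hfrob : ∀ A : Matrix ι ι ℝ, ∑ i, ∑ j, A i j * K i j = trace (A * Kᵀ) := fun A => by
      simp [trace, mul_apply]
    rw [hfrob, add_mul, trace_add, hK, trace_mul_cycle S K K]
    ring
  have := (hS.mul_mul_conjTranspose_same K).trace_nonneg
  rw [conjTranspose_eq_transpose_of_trivial] at this
  rw [htrace]
  positivity

variable {n : ℕ}

local notation "𝕊" n:max => sphere (0 : EuclideanSpace ℝ (Fin n)) 1

instance [NeZero n] : IsProbabilityMeasure (sphereUniform n) := by
  have : Nonempty (𝕊 n) := (NormedSpace.sphere_nonempty.mpr zero_le_one).to_subtype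
  unfold sphereUniform
  infer_instance

lemma Continuous.integrable_sphereUniform [NeZero n] {g : 𝕊 n → ℝ} (hg : Continuous g) :
    Integrable g (sphereUniform n) :=
  hg.integrable_of_hasCompactSupport (HasCompactSupport.of_compactSpace g)

lemma integral_sphereUniform_comp_sphereHomeomorph
    (e : EuclideanSpace ℝ (Fin n) ≃ₗᵢ[ℝ] EuclideanSpace ℝ (Fin n)) (g : 𝕊 n → ℝ) :
    ∫ θ, g (e.sphereHomeomorph θ) ∂sphereUniform n = ∫ θ, g θ ∂sphereUniform n :=
  ((e.measurePreserving_sphereHomeomorph e.measurePreserving).smul_measure _).integral_comp'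
    (f := e.sphereHomeomorph.toMeasurableEquiv) g

lemma sum_sphere_apply_sq (θ : 𝕊 n) : ∑ k, (θ : EuclideanSpace ℝ (Fin n)) k ^ 2 = 1 := by
  rw [← EuclideanSpace.real_norm_sq_eq, norm_eq_of_mem_sphere θ, one_pow]

lemma integral_sphere_apply_mul_apply [NeZero n] (i j : Fin n) :
    ∫ θ : 𝕊 n, (θ : EuclideanSpace ℝ (Fin n)) i * (θ : EuclideanSpace ℝ (Fin n)) j
      ∂sphereUniform n = if i = j then (n : ℝ)⁻¹ else 0 := by
  split_ifs with hij
  · subst hij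
    have hswap : ∀ k, ∫ θ : 𝕊 n, (θ : EuclideanSpace ℝ (Fin n)) k ^ 2 ∂sphereUniform n
        = ∫ θ : 𝕊 n, (θ : EuclideanSpace ℝ (Fin n)) i ^ 2 ∂sphereUniform n := fun k => by
      rw [← integral_sphereUniform_comp_sphereHomeomorph
        (LinearIsometryEquiv.piLpCongrLeft 2 ℝ ℝ (Equiv.swap k i))]
      simp
    have hsum : ∑ k, ∫ θ : 𝕊 n, (θ : EuclideanSpace ℝ (Fin n)) k ^ 2 ∂sphereUniform n = 1 := by
      rw [← integral_finsetSum _ fun k _ => (by fun_prop : Continuous _).integrable_sphereUniform]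
      simp [sum_sphere_apply_sq]
    simp only [hswap, Finset.sum_const, Finset.card_univ, Fintype.card_fin, nsmul_eq_mul] at hsum
    simpa only [← sq] using (inv_eq_of_mul_eq_one_right hsum).symm
  · let reflect : EuclideanSpace ℝ (Fin n) ≃ₗᵢ[ℝ] EuclideanSpace ℝ (Fin n) :=
      LinearIsometryEquiv.piLpCongrRight 2
        fun k => if k = i then LinearIsometryEquiv.neg ℝ else LinearIsometryEquiv.refl ℝ ℝ
    have hreflect := integral_sphereUniform_comp_sphereHomeomorph reflect
      fun θ => (θ : EuclideanSpace ℝ (Fin n)) i * (θ : EuclideanSpace ℝ (Fin n)) j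
    simp [reflect, Ne.symm hij, integral_neg] at hreflect
    linarith

lemma sprj_eq_inner (θ : 𝕊 n) (x : EuclideanSpace ℝ (Fin n)) :
    sprj θ x = inner ℝ (θ : EuclideanSpace ℝ (Fin n)) x := by
  simp [sprj, PiLp.inner_apply, mul_comm]

lemma sprj_smul (θ : 𝕊 n) (c : ℝ) (x : EuclideanSpace ℝ (Fin n)) :
    sprj θ (c • x) = c * sprj θ x := by
  simp only [sprj_eq_inner, inner_smul_right]

lemma squad_eq_sum (A : Matrix (Fin n) (Fin n) ℝ) (θ : 𝕊 n) :
    squad A θ = ∑ i, ∑ j,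
      A i j * ((θ : EuclideanSpace ℝ (Fin n)) i * (θ : EuclideanSpace ℝ (Fin n)) j) := by
  simp only [squad]
  congr! 2 with i - j -
  ring

lemma squad_pos {A : Matrix (Fin n) (Fin n) ℝ} (hA : A.PosDef) (θ : 𝕊 n) : 0 < squad A θ := by
  have hθ : WithLp.ofLp (θ : EuclideanSpace ℝ (Fin n)) ≠ 0 := by
    simpa using ne_zero_of_mem_unit_sphere θ
  simpa [squad, dotProduct, mulVec, Finset.mul_sum, mul_assoc] using hA.dotProduct_mulVec_pos hθ

@[fun_prop]
lemma continuous_sprj (x : EuclideanSpace ℝ (Fin n)) : Continuous fun θ : 𝕊 n => sprj θ x := by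
  simp only [sprj_eq_inner]
  fun_prop

@[fun_prop]
lemma continuous_squad (A : Matrix (Fin n) (Fin n) ℝ) : Continuous fun θ : 𝕊 n => squad A θ := by
  simp only [squad_eq_sum]
  fun_prop

lemma continuous_sqrt_squad_div_squad (Sf : Matrix (Fin n) (Fin n) ℝ)
    {S : Matrix (Fin n) (Fin n) ℝ} (hS : S.PosDef) :
    Continuous fun θ : 𝕊 n => √(squad Sf θ / squad S θ) :=
  ((continuous_squad Sf).div (continuous_squad S) fun θ => (squad_pos hS θ).ne').sqrt

lemma integral_mul_squad [NeZero n] {w : 𝕊 n → ℝ} (hw : Continuous w)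
    (A : Matrix (Fin n) (Fin n) ℝ) :
    ∫ θ, w θ * squad A θ ∂sphereUniform n = ∑ i, ∑ j, A i j *
      ∫ θ : 𝕊 n, w θ * ((θ : EuclideanSpace ℝ (Fin n)) i * (θ : EuclideanSpace ℝ (Fin n)) j)
        ∂sphereUniform n := by
  simp only [squad_eq_sum, Finset.mul_sum]
  rw [integral_finsetSum _ fun i _ => (by fun_prop : Continuous _).integrable_sphereUniform]
  refine Finset.sum_congr rfl fun i _ => ?_
  rw [integral_finsetSum _ fun j _ => (by fun_prop : Continuous _).integrable_sphereUniform]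
  refine Finset.sum_congr rfl fun j _ => ?_
  rw [← integral_const_mul]
  congr 1 with θ
  ring

/-- The gain of the ideal sliced controller is `K(t) = (T - t)⁻¹ • slicedGain Σ_f Σ(t)`. -/
noncomputable def slicedGain (Sf S : Matrix (Fin n) (Fin n) ℝ) : Matrix (Fin n) (Fin n) ℝ :=
  Matrix.of fun i j =>
    (∫ θ : 𝕊 n, √(squad Sf θ / squad S θ) *
      ((θ : EuclideanSpace ℝ (Fin n)) i * (θ : EuclideanSpace ℝ (Fin n)) j) ∂sphereUniform n)
      - (1 / (n : ℝ)) * (if i = j then 1 else 0)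

lemma slicedGain_transpose (Sf S : Matrix (Fin n) (Fin n) ℝ) :
    (slicedGain Sf S)ᵀ = slicedGain Sf S := by
  ext i j
  simp only [slicedGain, transpose_apply, of_apply, mul_comm ((_ : EuclideanSpace ℝ (Fin n)) j),
    eq_comm (a := j)]

lemma integral_one_sub_sqrt_mul_apply_mul_apply [NeZero n] (Sf : Matrix (Fin n) (Fin n) ℝ)
    {S : Matrix (Fin n) (Fin n) ℝ} (hS : S.PosDef) (i j : Fin n) :
    ∫ θ : 𝕊 n, (1 - √(squad Sf θ / squad S θ)) *
      ((θ : EuclideanSpace ℝ (Fin n)) i * (θ : EuclideanSpace ℝ (Fin n)) j) ∂sphereUniform n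
      = -slicedGain Sf S i j := by
  have hr := continuous_sqrt_squad_div_squad Sf hS
  simp only [sub_mul, one_mul]
  rw [integral_sub (by fun_prop : Continuous _).integrable_sphereUniform
    (by fun_prop : Continuous _).integrable_sphereUniform, integral_sphere_apply_mul_apply]
  simp only [slicedGain, of_apply]
  split_ifs <;> ring

lemma integral_one_sub_sqrt_mul_squad_nonpos [NeZero n] (Sf : Matrix (Fin n) (Fin n) ℝ)
    {S K : Matrix (Fin n) (Fin n) ℝ} (hS : S.PosDef) {c : ℝ} (hc : 0 < c)
    (hK : K = c • slicedGain Sf S) :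
    ∫ θ, (1 - √(squad Sf θ / squad S θ)) * squad (K * S + S * Kᵀ) θ ∂sphereUniform n ≤ 0 := by
  have hr := continuous_sqrt_squad_div_squad Sf hS
  rw [integral_mul_squad (by fun_prop)]
  simp only [integral_one_sub_sqrt_mul_apply_mul_apply Sf hS, mul_neg, Finset.sum_neg_distrib,
    neg_nonpos]
  have hnonneg := hS.posSemidef.sum_mul_add_mul_transpose_apply_mul_nonneg
    (by rw [hK, transpose_smul, slicedGain_transpose] : Kᵀ = K)
  set Q := K * S + S * Kᵀ
  have hQK : ∑ i, ∑ j, Q i j * K i j = c * ∑ i, ∑ j, Q i j * slicedGain Sf S i j := by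
    simp only [hK, Matrix.smul_apply, smul_eq_mul, Finset.mul_sum, mul_left_comm c]
  exact (mul_nonneg_iff_of_pos_left hc).mp (hQK ▸ hnonneg)

noncomputable def slicedIntegrand (Sf S : Matrix (Fin n) (Fin n) ℝ) (x : EuclideanSpace ℝ (Fin n))
    (θ : 𝕊 n) : ℝ :=
  sprj θ x ^ 2 + (√(squad S θ) - √(squad Sf θ)) ^ 2

noncomputable def slicedIntegrandDeriv (Sf S S' : Matrix (Fin n) (Fin n) ℝ)
    (x v : EuclideanSpace ℝ (Fin n)) (θ : 𝕊 n) : ℝ :=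
  2 * sprj θ x * sprj θ v + (1 - √(squad Sf θ / squad S θ)) * squad S' θ

lemma HasDerivWithinAt.slicedIntegrand (Sf : Matrix (Fin n) (Fin n) ℝ)
    {x : ℝ → EuclideanSpace ℝ (Fin n)} {v : EuclideanSpace ℝ (Fin n)}
    {S : ℝ → Matrix (Fin n) (Fin n) ℝ} {S' : Matrix (Fin n) (Fin n) ℝ} {s : Set ℝ} {t : ℝ}
    (hx : HasDerivWithinAt x v s t) (hS : ∀ i j, HasDerivWithinAt (fun t => S t i j) (S' i j) s t)
    (hpos : (S t).PosDef) (θ : 𝕊 n) :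
    HasDerivWithinAt (fun t => slicedIntegrand Sf (S t) (x t) θ)
      (slicedIntegrandDeriv Sf (S t) S' (x t) v θ) s t := by
  have hprj : HasDerivWithinAt (fun t => sprj θ (x t)) (sprj θ v) s t := by
    simpa [sprj_eq_inner] using
      (hasDerivWithinAt_const t s (θ : EuclideanSpace ℝ (Fin n))).inner ℝ hx
  have hquad : HasDerivWithinAt (fun t => squad (S t) θ) (squad S' θ) s t := by
    simp only [squad_eq_sum]
    exact .fun_sum fun i _ => .fun_sum fun j _ => (hS i j).mul_const _
  exact ((hprj.fun_pow 2).add (hquad.sq_sqrt_sub_sqrt (squad_pos hpos θ) _)).congr_deriv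
    (by simp only [slicedIntegrandDeriv]; ring)

section Continuity

variable {X : Type*} [TopologicalSpace X] {s : Set X}

lemma continuousOn_sprj {x : X → EuclideanSpace ℝ (Fin n)} (hx : ContinuousOn x s) :
    ContinuousOn (fun p : X × 𝕊 n => sprj p.2 (x p.1)) (s ×ˢ univ) := by
  simp only [sprj_eq_inner]
  exact continuous_subtype_val.comp_continuousOn continuousOn_snd |>.inner
    (hx.comp continuousOn_fst fun p hp => hp.1)

lemma continuousOn_squad {A : X → Matrix (Fin n) (Fin n) ℝ} (hA : ContinuousOn A s) :
    ContinuousOn (fun p : X × 𝕊 n => squad (A p.1) p.2) (s ×ˢ univ) := by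
  simp only [squad_eq_sum]
  refine continuousOn_finsetSum _ fun i _ => continuousOn_finsetSum _ fun j _ => ?_
  have hAij := continuousOn_pi.mp (continuousOn_pi.mp hA i) j
  exact (hAij.comp continuousOn_fst fun p hp => hp.1).mul (by fun_prop)

lemma continuousOn_sqrt_squad_div_squad (Sf : Matrix (Fin n) (Fin n) ℝ)
    {S : X → Matrix (Fin n) (Fin n) ℝ} (hS : ContinuousOn S s) (hpos : ∀ x ∈ s, (S x).PosDef) :
    ContinuousOn (fun p : X × 𝕊 n => √(squad Sf p.2 / squad (S p.1) p.2)) (s ×ˢ univ) :=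
  ((continuousOn_squad (continuousOn_const (c := Sf))).div (continuousOn_squad hS)
    fun p hp => (squad_pos (hpos p.1 hp.1) p.2).ne').sqrt

lemma continuousOn_slicedIntegrand (Sf : Matrix (Fin n) (Fin n) ℝ)
    {x : X → EuclideanSpace ℝ (Fin n)} {S : X → Matrix (Fin n) (Fin n) ℝ}
    (hx : ContinuousOn x s) (hS : ContinuousOn S s) :
    ContinuousOn (fun p : X × 𝕊 n => slicedIntegrand Sf (S p.1) (x p.1) p.2) (s ×ˢ univ) :=
  ((continuousOn_sprj hx).pow 2).add
    (((continuousOn_squad hS).sqrt.sub (continuousOn_squad continuousOn_const).sqrt).pow 2)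

lemma continuousOn_slicedIntegrandDeriv (Sf : Matrix (Fin n) (Fin n) ℝ)
    {x v : X → EuclideanSpace ℝ (Fin n)} {S S' : X → Matrix (Fin n) (Fin n) ℝ}
    (hx : ContinuousOn x s) (hv : ContinuousOn v s) (hS : ContinuousOn S s)
    (hS' : ContinuousOn S' s) (hpos : ∀ y ∈ s, (S y).PosDef) :
    ContinuousOn (fun p : X × 𝕊 n => slicedIntegrandDeriv Sf (S p.1) (S' p.1) (x p.1) (v p.1) p.2)
      (s ×ˢ univ) :=
  (((continuousOn_const (c := (2 : ℝ))).mul (continuousOn_sprj hx)).mul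
    (continuousOn_sprj hv)).add (((continuousOn_const (c := (1 : ℝ))).sub
      (continuousOn_sqrt_squad_div_squad Sf hS hpos)).mul (continuousOn_squad hS'))

lemma continuousOn_slicedGain [NeZero n] (Sf : Matrix (Fin n) (Fin n) ℝ)
    {S : X → Matrix (Fin n) (Fin n) ℝ} (hS : ContinuousOn S s) (hpos : ∀ x ∈ s, (S x).PosDef) :
    ContinuousOn (fun x => slicedGain Sf (S x)) s := by
  refine continuousOn_pi.mpr fun i => continuousOn_pi.mpr fun j => .sub ?_ continuousOn_const
  refine continuousOn_integral_of_compact_support isCompact_univ ?_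
    fun _ _ _ hθ => (hθ trivial).elim
  exact (continuousOn_sqrt_squad_div_squad Sf hS hpos).mul (by fun_prop)

end Continuity

lemma integral_slicedIntegrandDeriv_nonpos [NeZero n] (Sf : Matrix (Fin n) (Fin n) ℝ)
    {S K : Matrix (Fin n) (Fin n) ℝ} (hS : S.PosDef) (x : EuclideanSpace ℝ (Fin n)) {a c : ℝ}
    (ha : 0 ≤ a) (hc : 0 < c) (hK : K = c • slicedGain Sf S) :
    ∫ θ, slicedIntegrandDeriv Sf S (K * S + S * Kᵀ) x (-a • x) θ ∂sphereUniform n ≤ 0 := by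
  have hr := continuous_sqrt_squad_div_squad Sf hS
  simp only [slicedIntegrandDeriv]
  refine (integral_add ?_ ?_).trans_le
    (add_nonpos (integral_nonpos fun θ => ?_) (integral_one_sub_sqrt_mul_squad_nonpos Sf hS hc hK))
  · exact (by fun_prop : Continuous _).integrable_sphereUniform
  · exact (by fun_prop : Continuous _).integrable_sphereUniform
  · show _ ≤ (0 : ℝ)
    rw [sprj_smul]
    nlinarith [sq_nonneg (sprj θ x)]

theorem sliced_SW2_nonincreasing_general
    (n : ℕ) (hn : 1 ≤ n) (T : ℝ)
    (mf : EuclideanSpace ℝ (Fin n))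
    (Sf : Matrix (Fin n) (Fin n) ℝ)
    (m : ℝ → EuclideanSpace ℝ (Fin n))
    (S : ℝ → Matrix (Fin n) (Fin n) ℝ)
    (hpos : ∀ t ∈ Set.Ico (0 : ℝ) T, (S t).PosDef)
    (K : ℝ → Matrix (Fin n) (Fin n) ℝ)
    (hK : ∀ t ∈ Set.Ico (0 : ℝ) T, ∀ i j : Fin n,
      K t i j = (1 / (T - t)) *
        ((∫ θ : sphere (0 : EuclideanSpace ℝ (Fin n)) 1,
            Real.sqrt (squad Sf θ / squad (S t) θ) *
              ((θ : EuclideanSpace ℝ (Fin n)) i * (θ : EuclideanSpace ℝ (Fin n)) j)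
            ∂(sphereUniform n))
          - (1 / (n : ℝ)) * (if i = j then 1 else 0)))
    (hm : ∀ t ∈ Set.Ico (0 : ℝ) T,
      HasDerivWithinAt m (-(1 / ((n : ℝ) * (T - t))) • (m t - mf)) (Set.Ico (0 : ℝ) T) t)
    (hS : ∀ t ∈ Set.Ico (0 : ℝ) T, ∀ i j : Fin n,
      HasDerivWithinAt (fun s => S s i j)
        ((K t * S t + S t * (K t)ᵀ) i j) (Set.Ico (0 : ℝ) T) t) :
    AntitoneOn
      (fun t => ∫ θ : sphere (0 : EuclideanSpace ℝ (Fin n)) 1,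
        (sprj θ (m t - mf)) ^ 2 +
          (Real.sqrt (squad (S t) θ) - Real.sqrt (squad Sf θ)) ^ 2
        ∂(sphereUniform n))
      (Set.Ico (0 : ℝ) T) := by
  have : NeZero n := ⟨by omega⟩
  have hTt : ∀ t ∈ Ico 0 T, T - t ≠ 0 := fun t ht => (sub_pos.mpr ht.2).ne'
  have hnTt : ∀ t ∈ Ico 0 T, (n : ℝ) * (T - t) ≠ 0 := fun t ht =>
    mul_ne_zero (NeZero.ne _) (hTt t ht)
  have hx : ContinuousOn (fun t => m t - mf) (Ico 0 T) := fun t ht =>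
    ((hm t ht).sub_const mf).continuousWithinAt
  have hv : ContinuousOn (fun t => -(1 / ((n : ℝ) * (T - t))) • (m t - mf)) (Ico 0 T) := by
    fun_prop (disch := assumption)
  have hSc : ContinuousOn S (Ico 0 T) := continuousOn_pi.mpr fun i =>
    continuousOn_pi.mpr fun j t ht => (hS t ht i j).continuousWithinAt
  have hKeq : ∀ t ∈ Ico 0 T, K t = (1 / (T - t)) • slicedGain Sf (S t) := fun t ht =>
    Matrix.ext (hK t ht)
  have hKc : ContinuousOn K (Ico 0 T) := by
    have := continuousOn_slicedGain Sf hSc hpos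
    exact ContinuousOn.congr (by fun_prop (disch := assumption)) hKeq
  have hS' : ContinuousOn (fun t => K t * S t + S t * (K t)ᵀ) (Ico 0 T) := by
    rw [continuousOn_iff_continuous_domRestrict] at hKc hSc ⊢
    exact (hKc.matrix_mul hSc).add (hSc.matrix_mul hKc.matrix_transpose)
  have hF := continuousOn_slicedIntegrand Sf hx hSc
  have hG := continuousOn_slicedIntegrandDeriv Sf hx hv hSc hS' hpos
  have hFG := fun t ht θ => ((hm t ht).sub_const mf).slicedIntegrand Sf (hS t ht) (hpos t ht) θ
  refine antitoneOn_integral_of_hasDerivWithinAt (convex_Ico 0 T) hF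
    (hG.mono (prod_mono interior_subset subset_rfl)) hFG ?_
  rw [interior_Ico]
  intro t ht
  have := sub_pos.mpr ht.2
  exact integral_slicedIntegrandDeriv_nonpos Sf (hpos t (Ioo_subset_Ico_self ht)) _
    (by positivity) (by positivity) (hKeq t (Ioo_subset_Ico_self ht))

/-- Along the mean/covariance dynamics induced by the ideal sliced controller, the squared
sliced Wasserstein distance
`f(t) = ∫ [(θᵀ(m(t)−m_f))² + (√(θᵀΣ(t)θ) − √(θᵀΣ_fθ))²] dσ(θ)` is nonincreasing on `[0,T)`. -/
theorem sliced_SW2_nonincreasing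
    (n : ℕ) (hn : 1 ≤ n) (T : ℝ) (hT : 0 < T)
    (mf : EuclideanSpace ℝ (Fin n))
    (Sf : Matrix (Fin n) (Fin n) ℝ) (hSf : Sf.PosDef)
    (m : ℝ → EuclideanSpace ℝ (Fin n))
    (S : ℝ → Matrix (Fin n) (Fin n) ℝ)
    (hpos : ∀ t ∈ Set.Ico (0 : ℝ) T, (S t).PosDef)
    (K : ℝ → Matrix (Fin n) (Fin n) ℝ)
    (hK : ∀ t ∈ Set.Ico (0 : ℝ) T, ∀ i j : Fin n,
      K t i j = (1 / (T - t)) *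
        ((∫ θ : sphere (0 : EuclideanSpace ℝ (Fin n)) 1,
            Real.sqrt (squad Sf θ / squad (S t) θ) *
              ((θ : EuclideanSpace ℝ (Fin n)) i * (θ : EuclideanSpace ℝ (Fin n)) j)
            ∂(sphereUniform n))
          - (1 / (n : ℝ)) * (if i = j then 1 else 0)))
    (hm : ∀ t ∈ Set.Ico (0 : ℝ) T,
      HasDerivWithinAt m (-(1 / ((n : ℝ) * (T - t))) • (m t - mf)) (Set.Ico (0 : ℝ) T) t)
    (hS : ∀ t ∈ Set.Ico (0 : ℝ) T, ∀ i j : Fin n,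
      HasDerivWithinAt (fun s => S s i j)
        ((K t * S t + S t * (K t)ᵀ) i j) (Set.Ico (0 : ℝ) T) t) :
    AntitoneOn
      (fun t => ∫ θ : sphere (0 : EuclideanSpace ℝ (Fin n)) 1,
        (sprj θ (m t - mf)) ^ 2 +
          (Real.sqrt (squad (S t) θ) - Real.sqrt (squad Sf θ)) ^ 2
        ∂(sphereUniform n))
      (Set.Ico (0 : ℝ) T) :=
  sliced_SW2_nonincreasing_general n hn T mf Sf m S hpos K hK hm hS
end
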